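/- arXiv:1807.00758 — 7 statements merged into one kernel-verified Lean document; each statement's English description precedes it below -/
import Mathlib

section
/- For a ∀² HyperLTL formula φ and traces t, t', if the language inclusions L(M_φ[t/π₁]) ⊆ L(M_φ[t'/π₁]) and L(M_φ[t/π₂]) ⊆ L(M_φ[t'/π₂]) hold, then t dominates t'. Formally: for ψ : α → α → Prop, if (∀ s : α, ψ t s → ψ t' s) and (∀ s : α, ψ s t → ψ s t'), then for every trace set T' with t ∈ T', (∀ a ∈ T', ∀ b ∈ T', ψ a b) ↔ (∀ a ∈ T' ∪ {t'}, ∀ b ∈ T' ∪ {t'}, ψ a b). -/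
/-- `Dominates ψ c a`: both monitor languages of `c` are contained in those of `a`,
`L(M_ψ[c/π₁]) ⊆ L(M_ψ[a/π₁])` and `L(M_ψ[c/π₂]) ⊆ L(M_ψ[a/π₂])`. -/
def Dominates {α : Type*} (ψ : α → α → Prop) (c a : α) : Prop :=
  (∀ x, ψ c x → ψ a x) ∧ (∀ x, ψ x c → ψ x a)

namespace Dominates

variable {α : Type*} {ψ : α → α → Prop}

theorem refl (a : α) : Dominates ψ a a :=
  ⟨fun _ h ↦ h, fun _ h ↦ h⟩

theorem forall_mem_forall_mem {S T : Set α}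
    (hdom : ∀ a ∈ S, ∃ c ∈ T, Dominates ψ c a) (hT : ∀ a ∈ T, ∀ b ∈ T, ψ a b) :
    ∀ a ∈ S, ∀ b ∈ S, ψ a b := by
  intro a ha b hb
  obtain ⟨c, hc, hca, -⟩ := hdom a ha
  obtain ⟨d, hd, -, hdb⟩ := hdom b hb
  exact hca b (hdb c (hT c hc d hd))

end Dominates

theorem forall2_dominance {α : Type*} (ψ : α → α → Prop) (t t' : α)
    (h₁ : ∀ s : α, ψ t s → ψ t' s) (h₂ : ∀ s : α, ψ s t → ψ s t') :
    ∀ T' : Set α, t ∈ T' →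
      ((∀ a ∈ T', ∀ b ∈ T', ψ a b) ↔
        (∀ a ∈ T' ∪ {t'}, ∀ b ∈ T' ∪ {t'}, ψ a b)) := by
  intro T' ht
  refine ⟨Dominates.forall_mem_forall_mem ?_, fun h a ha b hb ↦ h a (.inl ha) b (.inl hb)⟩
  rintro a (ha | rfl)
  · exact ⟨a, ha, .refl a⟩
  · exact ⟨t, ht, h₁, h₂⟩
end

section
/- For a ∀² HyperLTL formula φ whose body ψ is a reflexive and symmetric relation, a trace t dominates a trace t' if and only if L(M_φ[t/π₁]) ⊆ L(M_φ[t'/π₁]). Formally: for ψ : α → α → Prop with (∀ a, ψ a a) and (∀ a b, ψ a b → ψ b a), and traces t, t' : α, the following are equivalent: (i) for every trace set T' with t ∈ T', (∀ a ∈ T', ∀ b ∈ T', ψ a b) ↔ (∀ a ∈ T' ∪ {t'}, ∀ b ∈ T' ∪ {t'}, ψ a b); (ii) ∀ s : α, ψ t s → ψ t' s. -/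
theorem forall2_dominance_refl_symm {α : Type*} (ψ : α → α → Prop)
    (hrefl : ∀ a, ψ a a) (hsymm : ∀ a b, ψ a b → ψ b a) (t t' : α) :
    (∀ T' : Set α, t ∈ T' →
      ((∀ a ∈ T', ∀ b ∈ T', ψ a b) ↔
        (∀ a ∈ T' ∪ {t'}, ∀ b ∈ T' ∪ {t'}, ψ a b))) ↔
    (∀ s : α, ψ t s → ψ t' s) := by
  constructor
  · intro h s hts
    have := (h {t, s} (by simp)).mp ?_ t' (by simp) s (by simp)
    · exact this
    · rintro a (rfl | rfl) b (rfl | rfl)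
      · exact hrefl _
      · exact hts
      · exact hsymm _ _ hts
      · exact hrefl _
  · intro hsub T' htT'
    constructor
    · rintro h a (haT' | rfl) b (hbT' | rfl)
      · exact h a haT' b hbT'
      · exact hsymm _ _ (hsub a (h t htT' a haT'))
      · exact hsub b (h t htT' b hbT')
      · exact hrefl _
    · intro h a ha b hb
      exact h a (Or.inl ha) b (Or.inl hb)
end

section
/- For a ∀ⁿ HyperLTL formula φ and traces t, t', if for every trace variable πᵢ the language inclusion L(M_φ[t/πᵢ]) ⊆ L(M_φ[t'/πᵢ]) holds, then t dominates t'. Formally: for ψ : (Fin n → α) → Prop, if for every i : Fin n and every assignment v : Fin n → α, ψ (Function.update v i t) → ψ (Function.update v i t'), then for every trace set T' with t ∈ T', (∀ v : Fin n → α, (∀ i, v i ∈ T') → ψ v) ↔ (∀ v : Fin n → α, (∀ i, v i ∈ T' ∪ {t'}) → ψ v). -/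
theorem foralln_dominance {α : Type*} {n : ℕ} (ψ : (Fin n → α) → Prop) (t t' : α)
    (h : ∀ i : Fin n, ∀ v : Fin n → α,
      ψ (Function.update v i t) → ψ (Function.update v i t')) :
    ∀ T' : Set α, t ∈ T' →
      ((∀ v : Fin n → α, (∀ i, v i ∈ T') → ψ v) ↔
        (∀ v : Fin n → α, (∀ i, v i ∈ T' ∪ {t'}) → ψ v)) := by
  intro T' ht
  constructor
  · intro H v hv
    classical
    set w : Fin n → α := fun i => if v i ∈ T' then v i else t with hw
    have key : ∀ s : Finset (Fin n), (∀ i ∈ s, v i ∉ T') →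
        ψ (fun i => if i ∈ s then t' else w i) := by
      intro s
      induction s using Finset.induction with
      | empty =>
        intro _
        simp only [Finset.notMem_empty, if_false]
        exact H w (fun i => by by_cases hi : v i ∈ T' <;> simp [hw, hi, ht])
      | @insert a s ha ih =>
        intro hs
        have haT : v a ∉ T' := hs a (Finset.mem_insert_self a s)
        have hprev := ih (fun i hi => hs i (Finset.mem_insert_of_mem hi))
        have heq : (fun i => if i ∈ insert a s then t' else w i)
            = Function.update (fun i => if i ∈ s then t' else w i) a t' := by
          funext i
          by_cases hia : i = a
          · subst hia; simp [ha]
          · simp [Function.update_of_ne hia, Finset.mem_insert, hia]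
        rw [heq]
        apply h a
        have heq2 : Function.update (fun i => if i ∈ s then t' else w i) a t
            = (fun i => if i ∈ s then t' else w i) := by
          funext i
          by_cases hia : i = a
          · subst hia; simp [ha, hw, haT]
          · simp [Function.update_of_ne hia]
        rw [heq2]; exact hprev
    have := key (Finset.univ.filter (fun i => v i ∉ T')) (fun i hi => (Finset.mem_filter.mp hi).2)
    convert this using 1
    funext i
    by_cases hi : v i ∈ T'
    · simp [hi, hw]
    · have : v i = t' := by
        rcases hv i with h1 | h1
        · exact absurd h1 hi
        · exact h1
      simp only [hi, if_false, Finset.mem_filter, Finset.mem_univ, true_and, not_false_iff,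
        if_true, this]
      split_ifs with h2
      · exact absurd (this ▸ h2) hi
      · rfl
  · intro H v hv
    exact H v (fun i => Or.inl (hv i))
end

section
/- For an ∃² HyperLTL formula φ and traces t, t', if the language inclusions L(M_φ[t'/π₁]) ⊆ L(M_φ[t/π₁]) and L(M_φ[t'/π₂]) ⊆ L(M_φ[t/π₂]) hold, then t dominates t'. Formally: for ψ : α → α → Prop, if (∀ s : α, ψ t' s → ψ t s) and (∀ s : α, ψ s t' → ψ s t), then for every trace set T' with t ∈ T', (∃ a ∈ T', ∃ b ∈ T', ψ a b) ↔ (∃ a ∈ T' ∪ {t'}, ∃ b ∈ T' ∪ {t'}, ψ a b). -/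
theorem exists2_dominance {α : Type*} (ψ : α → α → Prop) (t t' : α)
    (h₁ : ∀ s : α, ψ t' s → ψ t s) (h₂ : ∀ s : α, ψ s t' → ψ s t) :
    ∀ T' : Set α, t ∈ T' →
      ((∃ a ∈ T', ∃ b ∈ T', ψ a b) ↔
        (∃ a ∈ T' ∪ {t'}, ∃ b ∈ T' ∪ {t'}, ψ a b)) := by
  intro T' ht
  constructor
  · rintro ⟨a, ha, b, hb, hab⟩
    exact ⟨a, Or.inl ha, b, Or.inl hb, hab⟩
  · rintro ⟨a, (ha | ha), b, (hb | hb), hab⟩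
    · exact ⟨a, ha, b, hb, hab⟩
    · exact ⟨a, ha, t, ht, h₂ a (hb ▸ hab)⟩
    · exact ⟨t, ht, b, hb, h₁ b (ha ▸ hab)⟩
    · exact ⟨t, ht, t, ht, h₂ t (h₁ t' (ha ▸ (hb ▸ hab : ψ a t')))⟩
end

section
/- For an ∃ⁿ HyperLTL formula φ and traces t, t', if for every trace variable πᵢ the language inclusion L(M_φ[t'/πᵢ]) ⊆ L(M_φ[t/πᵢ]) holds, then t dominates t'. Formally: for ψ : (Fin n → α) → Prop, if for every i : Fin n and every assignment v : Fin n → α, ψ (Function.update v i t') → ψ (Function.update v i t), then for every trace set T' with t ∈ T', (∃ v : Fin n → α, (∀ i, v i ∈ T') ∧ ψ v) ↔ (∃ v : Fin n → α, (∀ i, v i ∈ T' ∪ {t'}) ∧ ψ v). -/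
theorem existsn_dominance {α : Type*} {n : ℕ} (ψ : (Fin n → α) → Prop) (t t' : α)
    (h : ∀ i : Fin n, ∀ v : Fin n → α,
      ψ (Function.update v i t') → ψ (Function.update v i t)) :
    ∀ T' : Set α, t ∈ T' →
      ((∃ v : Fin n → α, (∀ i, v i ∈ T') ∧ ψ v) ↔
        (∃ v : Fin n → α, (∀ i, v i ∈ T' ∪ {t'}) ∧ ψ v)) := by
  intro T' ht
  constructor
  · rintro ⟨v, hv, hψ⟩
    exact ⟨v, fun i => Or.inl (hv i), hψ⟩
  · rintro ⟨v, hv, hψ⟩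
    have key : ∀ s : Finset (Fin n), ∀ v : Fin n → α,
        (∀ i, v i ∈ T' ∨ (i ∈ s ∧ v i = t')) → ψ v →
        ∃ w : Fin n → α, (∀ i, w i ∈ T') ∧ ψ w := by
      intro s
      induction s using Finset.induction_on with
      | empty =>
        intro v hv hψ
        refine ⟨v, fun i => ?_, hψ⟩
        rcases hv i with h1 | h1
        · exact h1
        · exact absurd h1.1 (Finset.notMem_empty i)
      | @insert a s notmem ih =>
        intro v hv hψ
        by_cases ha : v a ∈ T'
        · refine ih v (fun i => ?_) hψ
          rcases hv i with h1 | h1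
          · exact Or.inl h1
          · rcases Finset.mem_insert.mp h1.1 with rfl | hi
            · exact Or.inl ha
            · exact Or.inr ⟨hi, h1.2⟩
        · have hva : v a = t' := by
            rcases hv a with h1 | h1
            · exact absurd h1 ha
            · exact h1.2
          have hψ' : ψ (Function.update v a t) := by
            apply h a
            rwa [← hva, Function.update_eq_self]
          refine ih (Function.update v a t) (fun i => ?_) hψ'
          rcases eq_or_ne i a with rfl | hia
          · simp [ht]
          · rw [Function.update_of_ne hia]
            rcases hv i with h1 | h1
            · exact Or.inl h1
            · rcases Finset.mem_insert.mp h1.1 with rfl | hi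
              · exact absurd rfl hia
              · exact Or.inr ⟨hi, h1.2⟩
    exact key Finset.univ v (fun i => by
      rcases hv i with h1 | h1
      · exact Or.inl h1
      · exact Or.inr ⟨Finset.mem_univ i, h1⟩) hψ
end

section
/- For a ∀∃ HyperLTL formula φ = ∀π.∃π'.ψ and traces t, t', if L(M_φ[t/π]) ⊆ L(M_φ[t'/π]) and L(M_φ[t'/π']) ⊆ L(M_φ[t/π']), then t dominates t'. Formally: for ψ : α → α → Prop, if (∀ s : α, ψ t s → ψ t' s) and (∀ s : α, ψ s t' → ψ s t), then for every trace set T' with t ∈ T', (∀ a ∈ T', ∃ b ∈ T', ψ a b) ↔ (∀ a ∈ T' ∪ {t'}, ∃ b ∈ T' ∪ {t'}, ψ a b). -/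
theorem forall_exists_dominance {α : Type*} (ψ : α → α → Prop) (t t' : α)
    (h₁ : ∀ s : α, ψ t s → ψ t' s) (h₂ : ∀ s : α, ψ s t' → ψ s t) :
    ∀ T' : Set α, t ∈ T' →
      ((∀ a ∈ T', ∃ b ∈ T', ψ a b) ↔
        (∀ a ∈ T' ∪ {t'}, ∃ b ∈ T' ∪ {t'}, ψ a b)) := by
  intro T' ht
  constructor
  · intro h a ha
    rcases ha with ha | ha
    · obtain ⟨b, hb, hψ⟩ := h a ha
      exact ⟨b, Or.inl hb, hψ⟩
    · obtain ⟨b, hb, hψ⟩ := h t ht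
      have : a = t' := by simpa using ha
      exact ⟨b, Or.inl hb, this ▸ h₁ b hψ⟩
  · intro h a ha
    obtain ⟨b, hb, hψ⟩ := h a (Or.inl ha)
    rcases hb with hb | hb
    · exact ⟨b, hb, hψ⟩
    · exact ⟨t, ht, h₂ a (by simpa [Set.mem_singleton_iff.mp hb] using hψ)⟩
end

section
/- For an ∃∀ HyperLTL formula φ = ∃π.∀π'.ψ and traces t, t', if L(M_φ[t'/π]) ⊆ L(M_φ[t/π]) and L(M_φ[t/π']) ⊆ L(M_φ[t'/π']), then t dominates t'. Formally: for ψ : α → α → Prop, if (∀ s : α, ψ t' s → ψ t s) and (∀ s : α, ψ s t → ψ s t'), then for every trace set T' with t ∈ T', (∃ a ∈ T', ∀ b ∈ T', ψ a b) ↔ (∃ a ∈ T' ∪ {t'}, ∀ b ∈ T' ∪ {t'}, ψ a b). -/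
theorem exists_forall_dominance {α : Type*} (ψ : α → α → Prop) (t t' : α)
    (h₁ : ∀ s : α, ψ t' s → ψ t s) (h₂ : ∀ s : α, ψ s t → ψ s t') :
    ∀ T' : Set α, t ∈ T' →
      ((∃ a ∈ T', ∀ b ∈ T', ψ a b) ↔
        (∃ a ∈ T' ∪ {t'}, ∀ b ∈ T' ∪ {t'}, ψ a b)) := by
  intro T' ht
  constructor
  · rintro ⟨a, ha, hab⟩
    refine ⟨a, Or.inl ha, ?_⟩
    rintro b (hb | rfl)
    · exact hab b hb
    · exact h₂ a (hab t ht)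
  · rintro ⟨a, (ha | rfl), hab⟩
    · exact ⟨a, ha, fun b hb => hab b (Or.inl hb)⟩
    · exact ⟨t, ht, fun b hb => h₁ b (hab b (Or.inl hb))⟩
end
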